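/- arXiv:2309.07244 — 6 statements merged into one kernel-verified Lean document; each statement's English description precedes it below -/
import Mathlib

section
/- Krein dichotomy: Let J be the standard symplectic matrix and L a Hermitian matrix. If v is a complex eigenvector of JL with eigenvalue λ not lying on the imaginary axis (Re λ ≠ 0), then v† L v = 0. -/
/-!
Since `Jᴴ = -J` and `L` is Hermitian, `v† L J L v` is purely imaginary while `v† L v` is real.
The eigenvalue equation gives `v† L J L v = λ · v† L v`, so `(λ + λ̄) · v† L v = 0`, and
`λ + λ̄ = 2 Re λ ≠ 0`.
-/

open Matrix

lemma Matrix.star_dotProduct_mulVec_self {ι R : Type*} [Fintype ι] [CommSemiring R] [StarRing R]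
    (A : Matrix ι ι R) (v : ι → R) :
    star (star v ⬝ᵥ A *ᵥ v) = star v ⬝ᵥ Aᴴ *ᵥ v := by
  rw [← star_dotProduct_star, star_star, star_mulVec, dotProduct_comm, dotProduct_mulVec,
    dotProduct_comm]

lemma Matrix.fromBlocks_zero_neg_one_one_zero_conjTranspose {m R : Type*} [DecidableEq m]
    [Ring R] [StarRing R] :
    (fromBlocks 0 (-1) 1 0 : Matrix (m ⊕ m) (m ⊕ m) R)ᴴ = -fromBlocks 0 (-1) 1 0 := by
  simp [fromBlocks_conjTranspose, fromBlocks_neg]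

lemma Complex.eq_zero_of_star_mul_eq_neg_mul {z b : ℂ} (hz : z.re ≠ 0) (hb : star b = b)
    (h : star (z * b) = -(z * b)) : b = 0 := by
  rw [star_mul', hb, ← add_eq_zero_iff_eq_neg, ← add_mul] at h
  refine (mul_eq_zero.mp h).resolve_left fun hsum => hz ?_
  simpa [Complex.ext_iff, ← two_mul] using hsum

theorem Matrix.IsHermitian.star_dotProduct_mulVec_eq_zero_of_mul_mulVec_eq_smul {ι : Type*}
    [Fintype ι] {L J : Matrix ι ι ℂ} (hL : L.IsHermitian) (hJ : Jᴴ = -J) {v : ι → ℂ} {lam : ℂ}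
    (hre : lam.re ≠ 0) (heig : (J * L) *ᵥ v = lam • v) :
    star v ⬝ᵥ L *ᵥ v = 0 := by
  have hLJL : star (star v ⬝ᵥ (L * J * L) *ᵥ v) = -(star v ⬝ᵥ (L * J * L) *ᵥ v) := by
    rw [star_dotProduct_mulVec_self, conjTranspose_mul, conjTranspose_mul, hL.eq, hJ,
      Matrix.neg_mul, Matrix.mul_neg, neg_mulVec, dotProduct_neg, Matrix.mul_assoc]
  have hw : star v ⬝ᵥ (L * J * L) *ᵥ v = lam * (star v ⬝ᵥ L *ᵥ v) := by
    rw [Matrix.mul_assoc, ← mulVec_mulVec, heig, mulVec_smul, dotProduct_smul, smul_eq_mul]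
  refine Complex.eq_zero_of_star_mul_eq_neg_mul hre ?_ (hw ▸ hLJL)
  rw [star_dotProduct_mulVec_self, hL.eq]

theorem stmt_1_general (n : ℕ)
    (L : Matrix (Fin n ⊕ Fin n) (Fin n ⊕ Fin n) ℂ) (hL : L.IsHermitian)
    (J : Matrix (Fin n ⊕ Fin n) (Fin n ⊕ Fin n) ℂ)
    (hJ : J = Matrix.fromBlocks 0 (-1) 1 0)
    (v : Fin n ⊕ Fin n → ℂ)
    (lam : ℂ) (hre : lam.re ≠ 0)
    (heig : (J * L).mulVec v = lam • v) :
    star v ⬝ᵥ L.mulVec v = 0 := by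
  subst hJ
  exact hL.star_dotProduct_mulVec_eq_zero_of_mul_mulVec_eq_smul
    fromBlocks_zero_neg_one_one_zero_conjTranspose hre heig

/-- Krein dichotomy: if JL v = λ v with L Hermitian, J the standard symplectic
    matrix, and Re λ ≠ 0, then v† L v = 0. -/
theorem stmt_1 (n : ℕ)
    (L : Matrix (Fin n ⊕ Fin n) (Fin n ⊕ Fin n) ℂ) (hL : L.IsHermitian)
    (J : Matrix (Fin n ⊕ Fin n) (Fin n ⊕ Fin n) ℂ)
    (hJ : J = Matrix.fromBlocks 0 (-1) 1 0)
    (v : Fin n ⊕ Fin n → ℂ) (hv : v ≠ 0)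
    (lam : ℂ) (hre : lam.re ≠ 0)
    (heig : (J * L).mulVec v = lam • v) :
    star v ⬝ᵥ L.mulVec v = 0 :=
  stmt_1_general n L hL J hJ v lam hre heig
end

section
/- In the molecular limit of the SSH chain, the stability block B₀ for the symmetry-breaking breather (φ_A,φ_B)=(x_+,x_-) with ω = g has eigenvalues {0, 0, i√(g²-4m²), -i√(g²-4m²)} when g² ≥ 4m²; in particular all eigenvalues are purely imaginary, so the breather is linearly stable at the molecular limit. -/
open Matrix Polynomial

set_option maxHeartbeats 2000000

theorem my_det_fin_four {R : Type*} [CommRing R] (A : Matrix (Fin 4) (Fin 4) R) :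
    A.det =
      A 0 0 * (A 1 1 * (A 2 2 * A 3 3 - A 2 3 * A 3 2) - A 1 2 * (A 2 1 * A 3 3 - A 2 3 * A 3 1) + A 1 3 * (A 2 1 * A 3 2 - A 2 2 * A 3 1))
    - A 0 1 * (A 1 0 * (A 2 2 * A 3 3 - A 2 3 * A 3 2) - A 1 2 * (A 2 0 * A 3 3 - A 2 3 * A 3 0) + A 1 3 * (A 2 0 * A 3 2 - A 2 2 * A 3 0))
    + A 0 2 * (A 1 0 * (A 2 1 * A 3 3 - A 2 3 * A 3 1) - A 1 1 * (A 2 0 * A 3 3 - A 2 3 * A 3 0) + A 1 3 * (A 2 0 * A 3 1 - A 2 1 * A 3 0))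
    - A 0 3 * (A 1 0 * (A 2 1 * A 3 2 - A 2 2 * A 3 1) - A 1 1 * (A 2 0 * A 3 2 - A 2 2 * A 3 0) + A 1 2 * (A 2 0 * A 3 1 - A 2 1 * A 3 0)) := by
  simp [Matrix.det_succ_row_zero, Fin.sum_univ_succ, Fin.succAbove,
    Matrix.submatrix_apply, Fin.succ, Fin.castSucc, Fin.castAdd, Fin.castLE]
  ring

/-- Stability block B₀ of the symmetry-breaking molecular SSH breather:
    characteristic polynomial λ²(λ² + (g² - 4m²)), hence (for g² ≥ 4m²)
    all eigenvalues are purely imaginary (linear stability). -/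
theorem stmt_6 (m g xp xm : ℝ) (hm : 0 < m) (hg2 : g ^ 2 ≥ 4 * m ^ 2)
    (hxp : xp ^ 2 = (1 + Real.sqrt (1 - 4 * m ^ 2 / g ^ 2)) / 2)
    (hxm : xm ^ 2 = (1 - Real.sqrt (1 - 4 * m ^ 2 / g ^ 2)) / 2)
    (hprod : xp * xm = -m / g)
    (Lm Lp : Matrix (Fin 2) (Fin 2) ℝ)
    (hLm : Lm = !![-g + g * xp ^ 2, -m; -m, -g + g * xm ^ 2])
    (hLp : Lp = !![-g + 3 * g * xp ^ 2, -m; -m, -g + 3 * g * xm ^ 2])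
    (B0 : Matrix (Fin 2 ⊕ Fin 2) (Fin 2 ⊕ Fin 2) ℂ)
    (hB0 : B0 = (Matrix.fromBlocks 0 (-Lp) Lm 0).map (algebraMap ℝ ℂ)) :
    B0.charpoly = X ^ 2 * (X ^ 2 + C (((g ^ 2 - 4 * m ^ 2 : ℝ) : ℂ))) ∧
    ∀ lam : ℂ, B0.charpoly.IsRoot lam → lam.re = 0 := by
  have hgne : g ≠ 0 := by
    intro h
    rw [h] at hg2
    nlinarith
  have h1r : xp ^ 2 + xm ^ 2 = 1 := by rw [hxp, hxm]; ring
  have h2r : xp ^ 2 * xm ^ 2 * g ^ 2 = m ^ 2 := by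
    have h : (xp * xm) ^ 2 = (-m / g) ^ 2 := by rw [hprod]
    field_simp at h
    nlinarith [h]
  have h1c : (xp : ℂ) ^ 2 + (xm : ℂ) ^ 2 = 1 := by exact_mod_cast h1r
  have h2c : (xp : ℂ) ^ 2 * (xm : ℂ) ^ 2 * (g : ℂ) ^ 2 = (m : ℂ) ^ 2 := by
    exact_mod_cast h2r
  have hC1 : (C ((xp : ℂ)) : ℂ[X]) ^ 2 + (C ((xm : ℂ))) ^ 2 = 1 := by
    simpa using congrArg C h1c
  have hC2 : (C ((xp : ℂ)) : ℂ[X]) ^ 2 * (C ((xm : ℂ))) ^ 2 * (C ((g : ℂ))) ^ 2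
      = (C ((m : ℂ))) ^ 2 := by
    simpa using congrArg C h2c
  have hmain : B0.charpoly = X ^ 2 * (X ^ 2 + C (((g ^ 2 - 4 * m ^ 2 : ℝ) : ℂ))) := by
    rw [← Matrix.charpoly_reindex finSumFinEquiv B0, Matrix.charpoly, my_det_fin_four]
    subst hB0 hLm hLp
    simp only [charmatrix_apply, reindex_apply, submatrix_apply,
      show (finSumFinEquiv.symm (0 : Fin 4) : Fin 2 ⊕ Fin 2) = Sum.inl 0 from by decide,
      show (finSumFinEquiv.symm (1 : Fin 4) : Fin 2 ⊕ Fin 2) = Sum.inl 1 from by decide,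
      show (finSumFinEquiv.symm (2 : Fin 4) : Fin 2 ⊕ Fin 2) = Sum.inr 0 from by decide,
      show (finSumFinEquiv.symm (3 : Fin 4) : Fin 2 ⊕ Fin 2) = Sum.inr 1 from by decide,
      Matrix.map_apply, Matrix.fromBlocks_apply₁₁, Matrix.fromBlocks_apply₁₂,
      Matrix.fromBlocks_apply₂₁, Matrix.fromBlocks_apply₂₂, Matrix.neg_apply,
      Matrix.zero_apply, Matrix.cons_val_zero, Matrix.cons_val_one, Matrix.head_cons,
      Matrix.diagonal_apply, eq_self_iff_true, if_true, if_false,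
      eq_false (show ¬(0:Fin 4) = 1 by decide),
      eq_false (show ¬(0:Fin 4) = 2 by decide),
      eq_false (show ¬(0:Fin 4) = 3 by decide),
      eq_false (show ¬(1:Fin 4) = 0 by decide),
      eq_false (show ¬(1:Fin 4) = 2 by decide),
      eq_false (show ¬(1:Fin 4) = 3 by decide),
      eq_false (show ¬(2:Fin 4) = 0 by decide),
      eq_false (show ¬(2:Fin 4) = 1 by decide),
      eq_false (show ¬(2:Fin 4) = 3 by decide),
      eq_false (show ¬(3:Fin 4) = 0 by decide),
      eq_false (show ¬(3:Fin 4) = 1 by decide),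
      eq_false (show ¬(3:Fin 4) = 2 by decide)]
    norm_num [Complex.ofReal_neg, Complex.ofReal_add, Complex.ofReal_mul,
      Complex.ofReal_pow, Complex.ofReal_ofNat,
      Complex.coe_algebraMap, _root_.map_add, _root_.map_mul, _root_.map_neg,
      _root_.map_sub, _root_.map_pow, _root_.map_ofNat, _root_.map_one, _root_.map_zero]
    linear_combination
      (X ^ 2 * ((C (g:ℂ)) ^ 2 * (3 * ((C (xp:ℂ)) ^ 2 + (C (xm:ℂ)) ^ 2) - 1))
        - (C (g:ℂ)) ^ 2 * ((C (g:ℂ) - 3 * C (g:ℂ) * (C (xp:ℂ)) ^ 2)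
            * (C (g:ℂ) - 3 * C (g:ℂ) * (C (xm:ℂ)) ^ 2) - (C (m:ℂ)) ^ 2)) * hC1
      + (-(6 : ℂ[X]) * X ^ 2 + ((C (g:ℂ) - 3 * C (g:ℂ) * (C (xp:ℂ)) ^ 2)
            * (C (g:ℂ) - 3 * C (g:ℂ) * (C (xm:ℂ)) ^ 2) - (C (m:ℂ)) ^ 2)) * hC2
  refine ⟨hmain, ?_⟩
  intro lam hroot
  rw [hmain] at hroot
  have h0 : lam ^ 2 * (lam ^ 2 + (((g ^ 2 - 4 * m ^ 2 : ℝ)) : ℂ)) = 0 := by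
    simpa [IsRoot] using hroot
  have hc : (0 : ℝ) ≤ g ^ 2 - 4 * m ^ 2 := by linarith
  rcases mul_eq_zero.mp h0 with h | h
  · have : lam = 0 := by
      simpa using pow_eq_zero_iff (two_ne_zero) |>.mp h
    simp [this]
  · have h' : lam ^ 2 = -(((g ^ 2 - 4 * m ^ 2 : ℝ)) : ℂ) :=
      eq_neg_of_add_eq_zero_left h
    have hre : lam.re * lam.re - lam.im * lam.im = -(g ^ 2 - 4 * m ^ 2) := by
      have := congrArg Complex.re h'
      simpa [pow_two, Complex.mul_re] using this
    have him : lam.re * lam.im = 0 := by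
      have := congrArg Complex.im h'
      simp [pow_two, Complex.mul_im] at this
      linarith
    rcases mul_eq_zero.mp him with ha | hb
    · exact ha
    · have h2 : lam.re ^ 2 = 0 := by
        rw [hb] at hre
        nlinarith [sq_nonneg lam.re]
      simpa using pow_eq_zero_iff (two_ne_zero) |>.mp h2
end

section
/- For the inversion-even molecular SSH breather φ = (1/√2)(1,1) with ω = -m + g/2, the nonzero eigenvalues of the on-site stability block B₀ are ±i√(2m(2m+g)); hence this breather is linearly stable at the molecular limit if and only if g ≥ -2m. -/
open Matrix Polynomial

/-! Both diagonal blocks of `B₀` are zero, so `det (λ - B₀) = det (λ² + L₊ L₋)`: the spectrum of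
`B₀` consists of the square roots of the eigenvalues of `-L₊ L₋`. At the molecular limit
`L₋ = m [[1, -1], [-1, 1]]` and `L₊ = L₋ + g`, so `L₊ L₋ = (2m + g) L₋` has eigenvalues `0` and
`2m(2m + g)`, whence `χ_{B₀} = λ² (λ² + 2m(2m + g))`. Its roots are `0` and `±i√(2m(2m + g))`,
purely imaginary unless `2m(2m + g) < 0`, which for `m > 0` means `g < -2m`. -/

namespace Matrix

variable {n R : Type*} [Fintype n] [DecidableEq n] [CommRing R]

theorem expand_two_mapMatrix_charmatrix (A : Matrix n n R) :
    (expand R 2 : R[X] →+* R[X]).mapMatrix A.charmatrix =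
      scalar n (X ^ 2 : R[X]) - A.map C := by
  ext i j
  by_cases hij : i = j <;> simp [hij]

theorem charpoly_fromBlocks_zero₁₁_zero₂₂ (B C : Matrix n n R) :
    (fromBlocks 0 B C 0).charpoly = expand R 2 (B * C).charpoly := by
  -- `N` makes the characteristic matrix block triangular; its determinant `X ^ card n` is regular.
  let N : Matrix (n ⊕ n) (n ⊕ n) R[X] := fromBlocks (scalar n X) 0 (C.map Polynomial.C) 1
  have hmul : (fromBlocks 0 B C 0).charmatrix * N =
      fromBlocks (scalar n (X ^ 2) - (B * C).map Polynomial.C) (-B.map Polynomial.C) 0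
        (scalar n X) := by
    have hcomm : scalar n (X : R[X]) * C.map Polynomial.C = C.map Polynomial.C * scalar n X :=
      (scalar_commute _ (fun _ => Commute.all _ _) _).eq
    simp only [N, charmatrix_fromBlocks, charmatrix_zero, fromBlocks_multiply, hcomm]
    congr 1 <;> simp [Matrix.map_mul, sq, sub_eq_add_neg]
  have hdet := congrArg det hmul
  rw [det_mul, det_fromBlocks_zero₂₁, det_fromBlocks_zero₁₂] at hdet
  simp only [det_one, mul_one, scalar_apply, det_diagonal, Finset.prod_const,
    Finset.card_univ] at hdet
  refine (isRegular_X_pow (R := R) (Fintype.card n)).right ?_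
  rw [charpoly, charpoly, ← AlgHom.coe_toRingHom, RingHom.map_det,
    expand_two_mapMatrix_charmatrix]
  simpa [scalar_apply] using hdet

end Matrix

theorem charpoly_neg_mul_molecular (m g : ℝ) :
    (-!![m + g, -m; -m, m + g] * !![m, -m; -m, m]).charpoly =
      X ^ 2 + C (2 * m * (2 * m + g)) * X := by
  rw [charpoly_fin_two, trace_fin_two, det_fin_two]
  simp [Matrix.mul_apply, map_ofNat]
  ring

theorem isRoot_X_sq_mul_X_sq_add_C_iff {R : Type*} [CommRing R] [IsDomain R] {c z : R} :
    (X ^ 2 * (X ^ 2 + C c)).IsRoot z ↔ z = 0 ∨ z ^ 2 = -c := by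
  simp [eq_neg_iff_add_eq_zero]

theorem Complex.sq_eq_neg_ofReal_iff {c : ℝ} (hc : 0 ≤ c) {z : ℂ} :
    z ^ 2 = -(c : ℂ) ↔ z = I * √c ∨ z = -(I * √c) := by
  have hsq : (I * √c) ^ 2 = -(c : ℂ) := by
    rw [mul_pow, I_sq, ← ofReal_pow, Real.sq_sqrt hc, neg_one_mul]
  rw [← hsq, sq_eq_sq_iff_eq_or_eq_neg]

theorem exists_isRoot_X_sq_mul_X_sq_add_C_re_pos_iff (c : ℝ) :
    (∃ z : ℂ, (X ^ 2 * (X ^ 2 + C (c : ℂ))).IsRoot z ∧ 0 < z.re) ↔ c < 0 := by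
  simp_rw [isRoot_X_sq_mul_X_sq_add_C_iff]
  constructor
  · rintro ⟨z, hz | hz, hre⟩
    · simp [hz] at hre
    · by_contra! hc
      rcases (Complex.sq_eq_neg_ofReal_iff hc).1 hz with rfl | rfl <;> simp at hre
  · intro hc
    refine ⟨√(-c), Or.inr ?_, by simpa using hc⟩
    rw [← Complex.ofReal_pow, Real.sq_sqrt (by linarith), Complex.ofReal_neg]

/-- Stability block B₀ of the inversion-even molecular SSH breather
    φ = (1,1)/√2, ω = -m + g/2: nonzero eigenvalues are ±i√(2m(2m+g));
    B₀ has an eigenvalue with positive real part iff g < -2m. -/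
theorem stmt_7 (m g : ℝ) (hm : 0 < m)
    (h : Matrix (Fin 2) (Fin 2) ℝ) (hh : h = !![0, -m; -m, 0])
    (ω : ℝ) (hω : ω = -m + g / 2)
    (Lm Lp : Matrix (Fin 2) (Fin 2) ℝ)
    (hLm : Lm = h - ω • (1 : Matrix (Fin 2) (Fin 2) ℝ)
        + g • Matrix.diagonal (fun _ => (1 : ℝ) / 2))
    (hLp : Lp = h - ω • (1 : Matrix (Fin 2) (Fin 2) ℝ)
        + (3 * g) • Matrix.diagonal (fun _ => (1 : ℝ) / 2))
    (B0 : Matrix (Fin 2 ⊕ Fin 2) (Fin 2 ⊕ Fin 2) ℂ)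
    (hB0 : B0 = (Matrix.fromBlocks 0 (-Lp) Lm 0).map (algebraMap ℝ ℂ)) :
    B0.charpoly = X ^ 2 * (X ^ 2 + C (((2 * m * (2 * m + g) : ℝ) : ℂ))) ∧
    (0 ≤ 2 * m * (2 * m + g) →
      ∀ lam : ℂ, B0.charpoly.IsRoot lam →
        lam = 0 ∨ lam = Complex.I * Real.sqrt (2 * m * (2 * m + g)) ∨
          lam = -(Complex.I * Real.sqrt (2 * m * (2 * m + g)))) ∧
    ((∃ lam : ℂ, B0.charpoly.IsRoot lam ∧ 0 < lam.re) ↔ g < -2 * m) := by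
  have hLm' : Lm = !![m, -m; -m, m] := by
    subst hLm hh hω
    ext i j
    fin_cases i <;> fin_cases j <;> simp <;> ring
  have hLp' : Lp = !![m + g, -m; -m, m + g] := by
    subst hLp hh hω
    ext i j
    fin_cases i <;> fin_cases j <;> simp <;> ring
  have hcp : B0.charpoly = X ^ 2 * (X ^ 2 + C (((2 * m * (2 * m + g) : ℝ) : ℂ))) := by
    rw [hB0, charpoly_map, charpoly_fromBlocks_zero₁₁_zero₂₂, hLm', hLp',
      charpoly_neg_mul_molecular]
    simp
    ring
  refine ⟨hcp, fun hc z hz => ?_, ?_⟩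
  · rw [hcp, isRoot_X_sq_mul_X_sq_add_C_iff, Complex.sq_eq_neg_ofReal_iff hc] at hz
    tauto
  · rw [hcp, exists_isRoot_X_sq_mul_X_sq_add_C_re_pos_iff]
    constructor <;> intro hg <;> nlinarith
end

section
/- No Type I molecular breathers exist on the breathing kagome unit cell: there is no real normalized solution (a,b,c) with a,b,c pairwise distinct and all nonzero of the system ω a = g a³ - m b - m c, ω b = -m a + g b³ - m c, ω c = -m a - m b + g c³ with a² + b² + c² = 1. -/
/-!
Each equation says `g x³ + (m - ω) x = m (a + b + c)` for `x = a, b, c`, so the odd cubic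
`g X³ + (m - ω) X` takes the same value `m (a + b + c)` at three distinct points. These are
then the three roots of a cubic with no `X²` term, hence `a + b + c = 0`; the common value
vanishes, and summing the three equations gives `3 g a b c = 0`.
-/

variable {R : Type*} [CommRing R] [IsDomain R]

theorem add_add_eq_zero_of_cubic_eq {g p x y z : R} (hg : g ≠ 0)
    (hxy : x ≠ y) (hxz : x ≠ z) (hyz : y ≠ z)
    (hy : g * y ^ 3 + p * y = g * x ^ 3 + p * x)
    (hz : g * z ^ 3 + p * z = g * x ^ 3 + p * x) :
    x + y + z = 0 := by
  have hxy' : g * (x ^ 2 + x * y + y ^ 2) + p = 0 := by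
    refine (mul_eq_zero.1 ?_).resolve_left (sub_ne_zero.2 hxy)
    linear_combination -hy
  have hxz' : g * (x ^ 2 + x * z + z ^ 2) + p = 0 := by
    refine (mul_eq_zero.1 ?_).resolve_left (sub_ne_zero.2 hxz)
    linear_combination -hz
  have : g * ((y - z) * (x + y + z)) = 0 := by linear_combination hxy' - hxz'
  exact (mul_eq_zero.1 ((mul_eq_zero.1 this).resolve_left hg)).resolve_left (sub_ne_zero.2 hyz)

theorem stmt_9_general (m g ω a b c : ℝ) (hg : g ≠ 0)
    (h1 : ω * a = g * a ^ 3 - m * b - m * c)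
    (h2 : ω * b = -m * a + g * b ^ 3 - m * c)
    (h3 : ω * c = -m * a - m * b + g * c ^ 3)
    (hab : a ≠ b) (hbc : b ≠ c) (hac : a ≠ c)
    (ha : a ≠ 0) (hb : b ≠ 0) (hc : c ≠ 0) : False := by
  have ha' : g * a ^ 3 + (m - ω) * a = m * (a + b + c) := by linear_combination -h1
  have hb' : g * b ^ 3 + (m - ω) * b = m * (a + b + c) := by linear_combination -h2
  have hc' : g * c ^ 3 + (m - ω) * c = m * (a + b + c) := by linear_combination -h3
  have hsum : a + b + c = 0 :=
    add_add_eq_zero_of_cubic_eq hg hab hac hbc (hb'.trans ha'.symm) (hc'.trans ha'.symm)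
  have habc : 3 * (g * (a * b * c)) = 0 := by
    linear_combination ha' + hb' + hc'
      + (2 * m + ω - g * (a ^ 2 + b ^ 2 + c ^ 2 - a * b - b * c - a * c)) * hsum
  exact mul_ne_zero three_ne_zero (mul_ne_zero hg (mul_ne_zero (mul_ne_zero ha hb) hc)) habc

/-- No Type I molecular breathers on the breathing kagome unit cell: there is
    no normalized real solution (a,b,c) with pairwise distinct, nonzero
    components. -/
theorem stmt_9 (m g ω a b c : ℝ) (hg : g ≠ 0)
    (hnorm : a ^ 2 + b ^ 2 + c ^ 2 = 1)
    (h1 : ω * a = g * a ^ 3 - m * b - m * c)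
    (h2 : ω * b = -m * a + g * b ^ 3 - m * c)
    (h3 : ω * c = -m * a - m * b + g * c ^ 3)
    (hab : a ≠ b) (hbc : b ≠ c) (hac : a ≠ c)
    (ha : a ≠ 0) (hb : b ≠ 0) (hc : c ≠ 0) : False :=
  stmt_9_general m g ω a b c hg h1 h2 h3 hab hbc hac ha hb hc
end

section
/- For Type II kagome molecular breathers (a, b, b) with a ≠ b, the equations determine b = a(g a² - ω)/(2m) and ω must equal one of ω_±(a) = m + g a² + 2m²/(g a²) ± m√(1 + 4m²/(g² a⁴)). -/
/-- Type II kagome molecular breathers (a, b, b) with a ≠ b: the equations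
    force b = a(ga² - ω)/(2m) and ω ∈ {ω₊(a), ω₋(a)}. -/
theorem stmt_13 (m g a b ω : ℝ) (hm : 0 < m) (hg : g ≠ 0)
    (ha : a ≠ 0) (hab : a ≠ b)
    (h1 : ω * a = g * a ^ 3 - 2 * m * b)
    (h2 : ω * b = -m * a - m * b + g * b ^ 3)
    (hfact : ω - m = g * (a ^ 2 + a * b + b ^ 2)) :
    b = a * (g * a ^ 2 - ω) / (2 * m) ∧
    (ω = m + g * a ^ 2 + 2 * m ^ 2 / (g * a ^ 2)
        + m * Real.sqrt (1 + 4 * m ^ 2 / (g ^ 2 * a ^ 4)) ∨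
     ω = m + g * a ^ 2 + 2 * m ^ 2 / (g * a ^ 2)
        - m * Real.sqrt (1 + 4 * m ^ 2 / (g ^ 2 * a ^ 4))) := by
  have hmne : m ≠ 0 := hm.ne'
  have hb : b = a * (g * a ^ 2 - ω) / (2 * m) := by
    field_simp; linarith
  refine ⟨hb, ?_⟩
  have key : (g * a^2 * ω - (g^2*a^4 + m*g*a^2 + 2*m^2))^2
      = m^2 * (g^2*a^4 + 4*m^2) := by
    linear_combination (-(g*a^2)*4*m^2) * hfact
      + ((g*a^2)*(2*m*g*a + g*(2*m*b + g*a^3 - ω*a))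
         + 2*g^2*a^2*(a*ω - g*a^3 + 2*m*b - 2*a*m) - 8*g^2*a^2*m*b) * h1
  set s := Real.sqrt (1 + 4 * m ^ 2 / (g ^ 2 * a ^ 4)) with hsdef
  have hs : s ^ 2 = 1 + 4 * m ^ 2 / (g ^ 2 * a ^ 4) :=
    Real.sq_sqrt (by positivity)
  have key2 : (ω - (m + g * a ^ 2 + 2 * m ^ 2 / (g * a ^ 2)))^2 = (m * s)^2 := by
    rw [mul_pow, hs]
    have hu : g * a ^ 2 ≠ 0 := by positivity
    field_simp
    linear_combination key
  rcases sq_eq_sq_iff_eq_or_eq_neg.mp key2 with h | h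
  · left; linarith
  · right; linarith
end

section
/- If a unitary U commutes with the hopping matrix h and satisfies the quartic constraint Σ_a U*_{a ã} U*_{a b̃} U_{a c̃} U_{a d̃} = δ_{ã b̃} δ_{ã c̃} δ_{ã d̃}, and φ solves the stationary nonlinear equation ω φ_a = Σ_b h_{ab} φ_b + g |φ_a|² φ_a, then U†φ (equivalently Uφ) also solves the same equation with the same frequency ω. -/
open Matrix

/-- If a unitary U commutes with h and satisfies the quartic on-site
    constraint, and φ solves the stationary nonlinear equation, then Uφ
    solves the same equation with the same frequency ω. -/
theorem stmt_17 (n : ℕ) (h U : Matrix (Fin n) (Fin n) ℂ)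
    (hh : h.IsHermitian) (hU : Uᴴ * U = 1)
    (hcomm : U * h = h * U)
    (hquart : ∀ a' b' c' d' : Fin n,
      ∑ a, star (U a a') * star (U a b') * U a c' * U a d' =
        (if a' = b' then (1 : ℂ) else 0) * (if a' = c' then 1 else 0) *
          (if a' = d' then 1 else 0))
    (g ω : ℝ) (φ : Fin n → ℂ)
    (hφ : ∀ a, (ω : ℂ) * φ a =
      (∑ b, h a b * φ b) + (g : ℂ) * ‖φ a‖ ^ 2 * φ a) :
    ∀ a, (ω : ℂ) * U.mulVec φ a =
      (∑ b, h a b * U.mulVec φ b)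
        + (g : ℂ) * ‖U.mulVec φ a‖ ^ 2 * U.mulVec φ a := by
  set ψ : Fin n → ℂ := U.mulVec φ with hψ
  have habs : ∀ z : ℂ, ((‖z‖ : ℂ)) ^ 2 = star z * z := by
    intro z
    have : ((‖z‖ ^ 2 : ℝ) : ℂ) = (Complex.normSq z : ℂ) := by
      rw [Complex.sq_norm]
    push_cast at this
    rw [this, ← Complex.mul_conj]
    simp [mul_comm, Complex.star_def]
  set Nφ : Fin n → ℂ := fun a => star (φ a) * φ a * φ a with hNφ
  set Nψ : Fin n → ℂ := fun a => star (ψ a) * ψ a * ψ a with hNψ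
  -- key: Uᴴ.mulVec Nψ = Nφ
  have key : Uᴴ.mulVec Nψ = Nφ := by
    funext a'
    have expand : ∀ a, star (ψ a) * ψ a * ψ a =
        ∑ b', ∑ c', ∑ d',
          (star (U a b') * U a c' * U a d') * (star (φ b') * φ c' * φ d') := by
      intro a
      simp only [hψ, Matrix.mulVec, dotProduct, star_sum, star_mul',
        Finset.sum_mul, Finset.mul_sum]
      have swap3 : ∀ f : Fin n → Fin n → Fin n → ℂ,
          ∑ x, ∑ y, ∑ z, f x y z = ∑ z, ∑ y, ∑ x, f x y z := fun f =>
        calc ∑ x, ∑ y, ∑ z, f x y z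
            = ∑ y, ∑ x, ∑ z, f x y z := Finset.sum_comm
          _ = ∑ y, ∑ z, ∑ x, f x y z :=
              Finset.sum_congr rfl fun y _ => Finset.sum_comm
          _ = ∑ z, ∑ y, ∑ x, f x y z := Finset.sum_comm
      rw [swap3]
      apply Finset.sum_congr rfl; intro b' _
      apply Finset.sum_congr rfl; intro c' _
      apply Finset.sum_congr rfl; intro d' _
      ring
    have lhs : Uᴴ.mulVec Nψ a' =
        ∑ b', ∑ c', ∑ d',
          (∑ a, star (U a a') * star (U a b') * U a c' * U a d') *
            (star (φ b') * φ c' * φ d') := by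
      simp only [Matrix.mulVec, dotProduct, Matrix.conjTranspose_apply, hNψ]
      calc ∑ a, star (U a a') * (star (ψ a) * ψ a * ψ a)
          = ∑ a, ∑ b', ∑ c', ∑ d',
              (star (U a a') * star (U a b') * U a c' * U a d') *
                (star (φ b') * φ c' * φ d') := by
            apply Finset.sum_congr rfl; intro a _
            rw [expand a]
            simp only [Finset.mul_sum]
            apply Finset.sum_congr rfl; intro b' _
            apply Finset.sum_congr rfl; intro c' _
            apply Finset.sum_congr rfl; intro d' _
            ring
        _ = ∑ b', ∑ c', ∑ d',
              (∑ a, star (U a a') * star (U a b') * U a c' * U a d') *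
                (star (φ b') * φ c' * φ d') := by
            rw [Finset.sum_comm]
            apply Finset.sum_congr rfl; intro b' _
            rw [Finset.sum_comm]
            apply Finset.sum_congr rfl; intro c' _
            rw [Finset.sum_comm]
            apply Finset.sum_congr rfl; intro d' _
            rw [Finset.sum_mul]
    rw [lhs]
    simp only [hquart]
    simp [Finset.sum_ite_eq', ite_mul, mul_ite, hNφ]
  have hUUH : U * Uᴴ = 1 := mul_eq_one_comm.mp hU
  have hNeq : Nψ = U.mulVec Nφ := by
    rw [← key, Matrix.mulVec_mulVec, hUUH, Matrix.one_mulVec]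
  intro a
  have step1 : (ω : ℂ) * ψ a = ∑ b, U a b * ((ω : ℂ) * φ b) := by
    simp only [hψ, Matrix.mulVec, dotProduct, Finset.mul_sum]
    apply Finset.sum_congr rfl; intro b _; ring
  rw [step1]
  simp only [hφ, mul_add, Finset.sum_add_distrib]
  have t1 : ∑ b, U a b * ∑ c, h b c * φ c = ∑ b, h a b * ψ b := by
    have : ∑ b, U a b * ∑ c, h b c * φ c = ((U * h).mulVec φ) a := by
      simp [Matrix.mulVec, dotProduct, Matrix.mul_apply, Finset.sum_mul,
        Finset.mul_sum]
      rw [Finset.sum_comm]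
      apply Finset.sum_congr rfl; intro b _
      apply Finset.sum_congr rfl; intro c _
      ring
    rw [this, hcomm, ← Matrix.mulVec_mulVec]
    simp [Matrix.mulVec, dotProduct, hψ]
  have t2 : ∑ b, U a b * ((g : ℂ) * ‖φ b‖ ^ 2 * φ b) =
      (g : ℂ) * ‖ψ a‖ ^ 2 * ψ a := by
    have : ∀ b, U a b * ((g : ℂ) * ‖φ b‖ ^ 2 * φ b) =
        (g : ℂ) * (U a b * Nφ b) := by
      intro b; rw [habs]; simp only [hNφ]; ring
    simp only [this, ← Finset.mul_sum]
    have : ∑ b, U a b * Nφ b = Nψ a := by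
      rw [hNeq]; simp [Matrix.mulVec, dotProduct]
    rw [this, habs]
    simp only [hNψ]; ring
  rw [t1, t2]
end
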